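/- (Proposition C.1, efficiency of the rejection sampler.) Suppose x* ∈ argmin_{y ∈ ℝ^d} V(y) and that V satisfies V(x) − V(x*) ≤ (L/2)‖x − x*‖² for all x ∈ ℝ^d and some L > 0 (Assumption 2). For t > 0 and x ∈ ℝ^d, the acceptance probability of one proposal of the rejection sampler, A(t, x) = ∫_{ℝ^d} exp(−V(z) + V(x*)) dN(e^{t}x, (e^{2t} − 1) I_d)(z), satisfies A(t, x) ≥ (L(e^{2t} − 1) + 1)^{−d/2} exp( −(L/2) ‖x* − e^{t}x‖² / (L(e^{2t} − 1) + 1) ). Consequently, the expected number of proposals needed to obtain n accepted samples from p_{0|t}(·|x) is at most n (L(e^{2t} − 1) + 1)^{d/2} exp( (L/2) ‖x* − e^{t}x‖² / (L(e^{2t} − 1) + 1) ). -/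

import Mathlib

open MeasureTheory Real
open scoped ENNReal RealInnerProductSpace

noncomputable section

/-- `ℝ^d` as a Euclidean space. -/
abbrev Euc (d : ℕ) := EuclideanSpace ℝ (Fin d)

/-- The standard Gaussian measure `γ^d` on `ℝ^d`. -/
def stdGaussian (d : ℕ) : Measure (Euc d) :=
  volume.withDensity fun x => ENNReal.ofReal ((2 * π) ^ (-(d : ℝ) / 2) * exp (-‖x‖ ^ 2 / 2))

/-- The unnormalized measure with density `exp (-V)` with respect to Lebesgue measure. -/
def gibbs (d : ℕ) (V : Euc d → ℝ) : Measure (Euc d) :=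
  volume.withDensity fun x => ENNReal.ofReal (exp (-V x))

/-- The time-`t` marginal `p_t` of the OU process `dX_t = -X_t dt + √2 dB_t` started at `p`,
i.e. the law of `e^{-t} X_0 + √(1-e^{-2t}) Z` with `X_0 ∼ p`, `Z ∼ γ^d` independent. -/
def ouMarginal (d : ℕ) (p : Measure (Euc d)) (t : ℝ) : Measure (Euc d) :=
  (p.prod (stdGaussian d)).map fun xz =>
    exp (-t) • xz.1 + Real.sqrt (1 - exp (-2 * t)) • xz.2

/-- The (smooth, positive) density of `p_t`. -/
def ouDensity (d : ℕ) (p : Measure (Euc d)) (t : ℝ) (x : Euc d) : ℝ :=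
  (2 * π * (1 - exp (-2 * t))) ^ (-(d : ℝ) / 2) *
    ∫ z, exp (-‖x - exp (-t) • z‖ ^ 2 / (2 * (1 - exp (-2 * t)))) ∂p

/-- The score `∇ ln p_t`. -/
def score (d : ℕ) (p : Measure (Euc d)) (t : ℝ) (x : Euc d) : Euc d :=
  gradient (fun y => Real.log (ouDensity d p t y)) x

/-- The conditional law `p_{0|t}(·|x)` of `X_0` given `X_t = x`, with density (w.r.t. `p`)
proportional to `z ↦ exp (-‖x - e^{-t} z‖² / (2 (1 - e^{-2t})))`. -/
def posterior (d : ℕ) (p : Measure (Euc d)) (t : ℝ) (x : Euc d) : Measure (Euc d) :=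
  ((p.withDensity fun z =>
      ENNReal.ofReal (exp (-‖x - exp (-t) • z‖ ^ 2 / (2 * (1 - exp (-2 * t)))))) Set.univ)⁻¹ •
    (p.withDensity fun z =>
      ENNReal.ofReal (exp (-‖x - exp (-t) • z‖ ^ 2 / (2 * (1 - exp (-2 * t))))))

/-- Kullback–Leibler divergence `KL(μ ‖ ν) = ∫ log (dμ/dν) dμ`. -/
def KLdiv {α : Type*} [MeasurableSpace α] (μ ν : Measure α) : ℝ :=
  ∫ x, Real.log ((μ.rnDeriv ν x).toReal) ∂μ

/-- Mean of the posterior `p_{0|t}(·|x)`. -/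
def postMean (d : ℕ) (p : Measure (Euc d)) (t : ℝ) (x : Euc d) : Euc d :=
  ∫ z, z ∂(posterior d p t x)

/-- Trace of the covariance matrix of the posterior `p_{0|t}(·|x)`. -/
def postTrCov (d : ℕ) (p : Measure (Euc d)) (t : ℝ) (x : Euc d) : ℝ :=
  ∫ z, ‖z - postMean d p t x‖ ^ 2 ∂(posterior d p t x)

/-- The Gaussian measure `N(m, s2 • I_d)` on `ℝ^d`, i.e. the law of `m + √s2 • Z`,
`Z ∼ γ^d`. -/
def gaussianPi (d : ℕ) (m : Euc d) (s2 : ℝ) : Measure (Euc d) :=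
  (stdGaussian d).map fun z => m + Real.sqrt s2 • z

/-!
Since `x*` minimises `V` and `V - V x* ≤ (L/2)‖· - x*‖²`, the acceptance weight
`exp (-V z + V x*)` lies between the Gaussian `exp (-(L/2)‖z - x*‖²)` and `1`. Integrating that
Gaussian against `N(m, s² I_d)` and completing the square in `‖w‖² + L‖s w - (x* - m)‖²` gives
exactly `(L s² + 1)^{-d/2} exp (-(L/2)‖x* - m‖² / (L s² + 1))`, a lower bound on `A(t,x)`; the
bound on the expected number `n / A(t,x)` of proposals is its reciprocal.
-/

def stdGaussianPDF (d : ℕ) (z : Euc d) : ℝ :=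
  (2 * π) ^ (-(d : ℝ) / 2) * exp (-‖z‖ ^ 2 / 2)

lemma integral_exp_neg_mul_sq_norm_sub {V : Type*} [NormedAddCommGroup V] [InnerProductSpace ℝ V]
    [FiniteDimensional ℝ V] [MeasurableSpace V] [BorelSpace V] {b : ℝ} (hb : 0 < b) (y : V) :
    ∫ v : V, exp (-b * ‖v - y‖ ^ 2) = (π / b) ^ (Module.finrank ℝ V / 2 : ℝ) := by
  rw [integral_sub_right_eq_self (fun v : V => exp (-b * ‖v‖ ^ 2)) y,
    GaussianFourier.integral_rexp_neg_mul_sq_norm hb]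

lemma integral_stdGaussianPDF (d : ℕ) : ∫ z, stdGaussianPDF d z = 1 := by
  have hsq : ∀ z : Euc d, exp (-‖z‖ ^ 2 / 2) = exp (-(1 / 2) * ‖z - 0‖ ^ 2) := fun z => by
    rw [sub_zero]; ring_nf
  simp only [stdGaussianPDF, hsq, integral_const_mul]
  rw [integral_exp_neg_mul_sq_norm_sub (by norm_num), finrank_euclideanSpace_fin,
    show π / (1 / 2) = 2 * π by ring, ← rpow_add (by positivity), neg_div, neg_add_cancel,
    rpow_zero]

lemma integral_stdGaussian {d : ℕ} {E : Type*} [NormedAddCommGroup E] [NormedSpace ℝ E]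
    (g : Euc d → E) : ∫ z, g z ∂stdGaussian d = ∫ z, stdGaussianPDF d z • g z := by
  rw [stdGaussian, integral_withDensity_eq_integral_toReal_smul (by fun_prop)
    (.of_forall fun _ => ENNReal.ofReal_lt_top)]
  congr with z
  rw [ENNReal.toReal_ofReal (by positivity), stdGaussianPDF]

instance (d : ℕ) : IsProbabilityMeasure (stdGaussian d) := by
  have hreal : (stdGaussian d).real Set.univ = 1 := by
    simpa [integral_stdGaussianPDF] using integral_stdGaussian (d := d) fun _ => (1 : ℝ)
  exact ⟨(ENNReal.toReal_eq_one_iff _).mp hreal⟩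

instance (d : ℕ) (m : Euc d) (s2 : ℝ) : IsProbabilityMeasure (gaussianPi d m s2) :=
  Measure.isProbabilityMeasure_map (by fun_prop)

lemma integral_gaussianPi {d : ℕ} {m : Euc d} {s2 : ℝ} {g : Euc d → ℝ}
    (hg : AEStronglyMeasurable g (gaussianPi d m s2)) :
    ∫ z, g z ∂gaussianPi d m s2 = ∫ z, g (m + √s2 • z) ∂stdGaussian d :=
  integral_map (by fun_prop) hg

lemma sq_norm_add_mul_sq_norm_smul_sub {E : Type*} [NormedAddCommGroup E] [InnerProductSpace ℝ E]
    {L s : ℝ} (hC : L * s ^ 2 + 1 ≠ 0) (w a : E) :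
    ‖w‖ ^ 2 + L * ‖s • w - a‖ ^ 2 =
      (L * s ^ 2 + 1) * ‖w - (L * s / (L * s ^ 2 + 1)) • a‖ ^ 2 +
        L * ‖a‖ ^ 2 / (L * s ^ 2 + 1) := by
  simp only [norm_sub_sq_real, real_inner_smul_left, real_inner_smul_right, norm_smul,
    Real.norm_eq_abs, mul_pow, sq_abs]
  field_simp
  ring

lemma integral_exp_neg_sq_dist_gaussianPi {d : ℕ} {L s2 : ℝ} (hL : 0 ≤ L) (hs2 : 0 ≤ s2)
    (m y : Euc d) :
    ∫ z, exp (-(L / 2) * ‖z - y‖ ^ 2) ∂gaussianPi d m s2 =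
      (L * s2 + 1) ^ (-(d : ℝ) / 2) * exp (-(L / 2) * ‖y - m‖ ^ 2 / (L * s2 + 1)) := by
  set C := L * s2 + 1
  have hC : 0 < C := by positivity
  have hs : √s2 ^ 2 = s2 := sq_sqrt hs2
  have hsplit : ∀ w : Euc d, stdGaussianPDF d w * exp (-(L / 2) * ‖m + √s2 • w - y‖ ^ 2) =
      (2 * π) ^ (-(d : ℝ) / 2) * exp (-(L / 2) * ‖y - m‖ ^ 2 / C) *
        exp (-(C / 2) * ‖w - (L * √s2 / C) • (y - m)‖ ^ 2) := fun w => by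
    have hsq := sq_norm_add_mul_sq_norm_smul_sub (s := √s2) (by rw [hs]; exact hC.ne') w (y - m)
    rw [hs] at hsq
    rw [stdGaussianPDF, show m + √s2 • w - y = √s2 • w - (y - m) by abel, mul_assoc,
      mul_assoc, ← exp_add, ← exp_add]
    congr 2
    linear_combination (-1 / 2 : ℝ) * hsq
  rw [integral_gaussianPi (by fun_prop), integral_stdGaussian]
  simp only [smul_eq_mul, hsplit, integral_const_mul]
  rw [integral_exp_neg_mul_sq_norm_sub (by positivity), finrank_euclideanSpace_fin,
    show π / (C / 2) = 2 * π * C⁻¹ by field_simp,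
    mul_rpow (x := 2 * π) (by positivity) (by positivity), inv_rpow hC.le, ← rpow_neg hC.le,
    neg_div, rpow_neg (by positivity)]
  field_simp

lemma integral_exp_neg_sq_dist_le_of_growth {E : Type*} [MeasurableSpace E]
    [NormedAddCommGroup E] [OpensMeasurableSpace E] {μ : Measure E} [IsFiniteMeasure μ]
    {V : E → ℝ} (hV : Measurable V) {L : ℝ} {xstar : E} (hmin : ∀ y, V xstar ≤ V y)
    (hgrowth : ∀ x, V x - V xstar ≤ L / 2 * ‖x - xstar‖ ^ 2) :
    ∫ z, exp (-(L / 2) * ‖z - xstar‖ ^ 2) ∂μ ≤ ∫ z, exp (-V z + V xstar) ∂μ := by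
  have hbounded : Integrable (fun z => exp (-V z + V xstar)) μ := by
    refine (integrable_const 1).mono' (by fun_prop) (.of_forall fun z => ?_)
    rw [norm_of_nonneg (exp_pos _).le]
    exact exp_le_one_iff.mpr (by linarith [hmin z])
  refine integral_mono_of_nonneg (.of_forall fun _ => (exp_pos _).le) hbounded
    (.of_forall fun z => exp_le_exp.mpr ?_)
  linarith [hgrowth z]

theorem rejection_sampler_efficiency_general
    (d : ℕ) (V : Euc d → ℝ) (hV : Measurable V)
    (L : ℝ) (hL : 0 < L) (xstar : Euc d)
    (hmin : ∀ y : Euc d, V xstar ≤ V y)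
    (hgrowth : ∀ x : Euc d, V x - V xstar ≤ L / 2 * ‖x - xstar‖ ^ 2)
    (t : ℝ) (ht : 0 < t) (x : Euc d) (n : ℕ) :
    (L * (exp (2 * t) - 1) + 1) ^ (-(d : ℝ) / 2) *
        exp (-(L / 2) * ‖xstar - exp t • x‖ ^ 2 / (L * (exp (2 * t) - 1) + 1)) ≤
      (∫ z, exp (-V z + V xstar) ∂(gaussianPi d (exp t • x) (exp (2 * t) - 1))) ∧
    (n : ℝ) / (∫ z, exp (-V z + V xstar) ∂(gaussianPi d (exp t • x) (exp (2 * t) - 1))) ≤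
      (n : ℝ) * ((L * (exp (2 * t) - 1) + 1) ^ ((d : ℝ) / 2) *
        exp (L / 2 * ‖xstar - exp t • x‖ ^ 2 / (L * (exp (2 * t) - 1) + 1))) := by
  have hs2 : 0 ≤ exp (2 * t) - 1 := sub_nonneg.mpr (one_le_exp (by positivity))
  have hlower := (integral_exp_neg_sq_dist_gaussianPi hL.le hs2 (exp t • x) xstar).symm.trans_le
    (integral_exp_neg_sq_dist_le_of_growth hV hmin hgrowth)
  refine ⟨hlower, ?_⟩
  set C := L * (exp (2 * t) - 1) + 1
  have hC : 0 < C := by positivity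
  calc _ ≤ (n : ℝ) / (C ^ (-(d : ℝ) / 2) * exp (-(L / 2) * ‖xstar - exp t • x‖ ^ 2 / C)) :=
        div_le_div_of_nonneg_left n.cast_nonneg (by positivity) hlower
    _ = _ := by rw [div_eq_mul_inv, mul_inv, neg_div, rpow_neg hC.le, inv_inv, ← exp_neg]; ring_nf

/-- **Proposition C.1 (efficiency of the rejection sampler).**
If `x*` minimizes `V` and `V(x) - V(x*) ≤ (L/2) ‖x - x*‖²`, then the acceptance probability
`A(t,x) = ∫ exp(-V z + V x*) dN(e^t x, (e^{2t}-1) I_d)(z)` of one proposal satisfies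
`A(t,x) ≥ (L(e^{2t}-1)+1)^{-d/2} exp(-(L/2)‖x* - e^t x‖²/(L(e^{2t}-1)+1))`, and hence the
expected number `n / A(t,x)` of proposals needed for `n` accepted samples is at most
`n (L(e^{2t}-1)+1)^{d/2} exp((L/2)‖x* - e^t x‖²/(L(e^{2t}-1)+1))`. -/
theorem rejection_sampler_efficiency
    (d : ℕ) (hd : 1 ≤ d) (V : Euc d → ℝ) (hV : Measurable V)
    (L : ℝ) (hL : 0 < L) (xstar : Euc d)
    (hmin : ∀ y : Euc d, V xstar ≤ V y)
    (hgrowth : ∀ x : Euc d, V x - V xstar ≤ L / 2 * ‖x - xstar‖ ^ 2)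
    (t : ℝ) (ht : 0 < t) (x : Euc d) (n : ℕ) (hn : 0 < n) :
    (L * (exp (2 * t) - 1) + 1) ^ (-(d : ℝ) / 2) *
        exp (-(L / 2) * ‖xstar - exp t • x‖ ^ 2 / (L * (exp (2 * t) - 1) + 1)) ≤
      (∫ z, exp (-V z + V xstar) ∂(gaussianPi d (exp t • x) (exp (2 * t) - 1))) ∧
    (n : ℝ) / (∫ z, exp (-V z + V xstar) ∂(gaussianPi d (exp t • x) (exp (2 * t) - 1))) ≤
      (n : ℝ) * ((L * (exp (2 * t) - 1) + 1) ^ ((d : ℝ) / 2) *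
        exp (L / 2 * ‖xstar - exp t • x‖ ^ 2 / (L * (exp (2 * t) - 1) + 1))) :=
  rejection_sampler_efficiency_general d V hV L hL xstar hmin hgrowth t ht x n
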